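/- Let F: GF(2^n) → GF(2^n) be a function and define for a ≠ 0 and b the quantity δ(a,b) = #{x ∈ GF(2^n) : F(x + a) + F(x) = b}. If F is differentially two-valued, i.e., the set {δ(a,b) : a ∈ GF(2^n)*, b ∈ GF(2^n)} has exactly two elements, then one of the values is 0 and the other is a power of 2, i.e., {δ(a,b)} = {0, 2^s} for some 1 ≤ s ≤ n. -/

import Mathlib

/-!
For `a ≠ 0` the map `x ↦ x + a` is a fixed-point-free involution preserving each fibre of
`x ↦ F (x + a) + F x`, so no `δ(a, b)` equals `1`. As `b` ranges over `K` the `δ(a, b)` add up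
to `|K|`, so they cannot all be at least `2`: one of the two values is `0`. The other value `d`
then divides `∑ b, δ(a, b) = 2 ^ n`, and `d ≠ 1`.
-/

open Finset

theorem Set.exists_eq_pair_of_ncard_eq_two {α : Type*} {s : Set α} {a : α} (hs : s.ncard = 2)
    (ha : a ∈ s) : ∃ b, s = {a, b} := by
  obtain ⟨x, y, -, rfl⟩ := Set.ncard_eq_two.mp hs
  rcases ha with rfl | rfl
  · exact ⟨y, rfl⟩
  · exact ⟨x, Set.pair_comm _ _⟩

section Differential

variable {G H : Type*}

noncomputable def diffCount [Add G] [Add H] (F : G → H) (a : G) (b : H) : ℕ :=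
  Nat.card {x : G // F (x + a) + F x = b}

def diffSpectrum [AddZeroClass G] [Add H] (F : G → H) : Set ℕ :=
  {d | ∃ a b, a ≠ 0 ∧ diffCount F a b = d}

theorem diffCount_ne_one [AddGroup G] [AddCommMagma H] (F : G → H) {a : G} (ha : a ≠ 0)
    (ha2 : a + a = 0) (b : H) : diffCount F a b ≠ 1 := by
  intro h
  obtain ⟨hsub, ⟨⟨x, hx⟩⟩⟩ := Nat.card_eq_one_iff_unique.mp h
  have hxa : F (x + a + a) + F (x + a) = b := by rwa [add_assoc, ha2, add_zero, add_comm]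
  have : x + a = x := congrArg Subtype.val (hsub.elim ⟨x + a, hxa⟩ ⟨x, hx⟩)
  exact ha (add_eq_left.mp this)

theorem sum_diffCount [Add G] [Add H] [Fintype G] [Fintype H] (F : G → H) (a : G) :
    ∑ b, diffCount F a b = Fintype.card G := by
  classical
  simp only [diffCount, Nat.card_eq_fintype_card, Fintype.card_subtype]
  exact (card_eq_sum_card_fiberwise fun x _ => mem_coe.2 (mem_univ (F (x + a) + F x))).symm

theorem exists_diffCount_eq_zero [AddGroup G] [AddCommMagma H] [Fintype G] [Fintype H]
    (hcard : Fintype.card G ≤ Fintype.card H) (F : G → H) {a : G} (ha : a ≠ 0)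
    (ha2 : a + a = 0) : ∃ b, diffCount F a b = 0 := by
  by_contra! hpos
  have hge : ∀ b, 2 ≤ diffCount F a b := fun b => by
    have := diffCount_ne_one F ha ha2 b
    have := hpos b
    omega
  have hsum : 2 * Fintype.card H ≤ Fintype.card G := calc
    2 * Fintype.card H = ∑ _b : H, 2 := by simp [mul_comm]
    _ ≤ ∑ b, diffCount F a b := sum_le_sum fun b _ => hge b
    _ = Fintype.card G := sum_diffCount F a
  have : 0 < Fintype.card G := Fintype.card_pos
  omega

variable [AddGroup G] (F : G → H)

theorem one_notMem_diffSpectrum [AddCommMagma H] (hG : ∀ a : G, a + a = 0) :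
    1 ∉ diffSpectrum F := fun ⟨a, b, ha, h⟩ => diffCount_ne_one F ha (hG a) b h

theorem zero_mem_diffSpectrum [Fintype G] [AddCommMagma H] [Fintype H] [Nontrivial G]
    (hG : ∀ a : G, a + a = 0) (hcard : Fintype.card G ≤ Fintype.card H) :
    0 ∈ diffSpectrum F := by
  obtain ⟨a, ha⟩ := exists_ne (0 : G)
  obtain ⟨b, hb⟩ := exists_diffCount_eq_zero hcard F ha (hG a)
  exact ⟨a, b, ha, hb⟩

theorem dvd_card_of_diffSpectrum_eq_pair [Fintype G] [Add H] [Fintype H] [Nontrivial G] {d : ℕ}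
    (hd : diffSpectrum F = {0, d}) : d ∣ Fintype.card G := by
  obtain ⟨a, ha⟩ := exists_ne (0 : G)
  rw [← sum_diffCount F a]
  refine dvd_sum fun b _ => ?_
  have hmem : diffCount F a b ∈ diffSpectrum F := ⟨a, b, ha, rfl⟩
  rw [hd] at hmem
  rcases hmem with h | h
  · rw [h]
    exact dvd_zero d
  · rw [Set.mem_singleton_iff.mp h]

end Differential

/-- a differentially two-valued function on `GF(2^n)` takes the
differential values `{0, 2^s}` for some `1 ≤ s ≤ n`. -/
theorem diff_two_valued (n : ℕ) (hn : 0 < n)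
    (K : Type*) [Field K] [Fintype K] (hK : Fintype.card K = 2 ^ n)
    (Fv : K → K)
    (htwo : {d : ℕ | ∃ a b : K, a ≠ 0 ∧
        Nat.card {x : K // Fv (x + a) + Fv x = b} = d}.ncard = 2) :
    ∃ s : ℕ, 1 ≤ s ∧ s ≤ n ∧
      {d : ℕ | ∃ a b : K, a ≠ 0 ∧
        Nat.card {x : K // Fv (x + a) + Fv x = b} = d} = {0, 2 ^ s} := by
  have hchar : ringChar K = 2 :=
    FiniteField.even_card_iff_char_two.mpr (by simp [hK, Nat.pow_mod, hn.ne'])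
  have : CharP K 2 := ringChar.eq_iff.mp hchar
  have hK2 : ∀ a : K, a + a = 0 := CharTwo.add_self_eq_zero
  change (diffSpectrum Fv).ncard = 2 at htwo
  change ∃ s, 1 ≤ s ∧ s ≤ n ∧ diffSpectrum Fv = {0, 2 ^ s}
  obtain ⟨d, hd⟩ := Set.exists_eq_pair_of_ncard_eq_two htwo (zero_mem_diffSpectrum Fv hK2 le_rfl)
  obtain ⟨s, hsn, rfl⟩ :=
    (Nat.dvd_prime_pow Nat.prime_two).mp (hK ▸ dvd_card_of_diffSpectrum_eq_pair Fv hd)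
  have hs : s ≠ 0 := by
    rintro rfl
    exact one_notMem_diffSpectrum Fv hK2 (by simp [hd])
  exact ⟨s, Nat.one_le_iff_ne_zero.mpr hs, hsn, hd⟩
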